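/- arXiv:hep-th/0503165 — 4 statements merged into one kernel-verified Lean document; each statement's English description precedes it below -/
import Mathlib

section
/- For every integer D ≥ 1, the equation s(D) = 2(D − 2) holds if and only if D ∈ {3, 4, 6, 10}. -/
/-- The dimension of the spinor space of the irreducible SUSY data in
space-time dimension `D`: writing `D = 8*q + r`, it equals `c_r * 16^q` with
`(c_0,…,c_7) = (1,1,1,2,4,8,8,16)`. -/
def susyDim (D : ℕ) : ℕ :=
  (match D % 8 with
    | 0 => 1
    | 1 => 1
    | 2 => 1
    | 3 => 2
    | 4 => 4
    | 5 => 8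
    | 6 => 8
    | _ => 16) * 16 ^ (D / 8)

lemma aux_pow : ∀ n : ℕ, 6 ≤ n → 8 * n ≤ 2 ^ n := by
  intro n
  induction n with
  | zero => omega
  | succ m ih =>
    intro h
    rcases Nat.lt_or_ge m 6 with hm | hm
    · interval_cases m <;> first | omega | norm_num
    · have := ih hm
      have h8 : (8:ℕ) ≤ 2 ^ m := le_trans (by omega) this
      rw [pow_succ]
      omega

lemma susyDim_big (D : ℕ) (h : 12 ≤ D) : 2 * (D - 2) < susyDim D := by
  have h1 : 2 ^ (D / 2) ≤ 2 * susyDim D := by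
    unfold susyDim
    have he : D / 2 = (D % 8) / 2 + 4 * (D / 8) := by omega
    rw [he, pow_add]
    have h16 : (2:ℕ) ^ (4 * (D / 8)) = 16 ^ (D / 8) := by
      rw [pow_mul]; norm_num
    rw [h16]
    have h8 : D % 8 = 0 ∨ D % 8 = 1 ∨ D % 8 = 2 ∨ D % 8 = 3 ∨ D % 8 = 4 ∨
        D % 8 = 5 ∨ D % 8 = 6 ∨ D % 8 = 7 := by omega
    have hp : (1:ℕ) ≤ 16 ^ (D / 8) := Nat.one_le_pow _ _ (by norm_num)
    rcases h8 with h8 | h8 | h8 | h8 | h8 | h8 | h8 | h8 <;>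
      rw [h8] <;> norm_num <;> nlinarith [hp]
  have h2 : 4 * (D - 2) < 2 ^ (D / 2) := by
    have h6 : 6 ≤ D / 2 := by omega
    have := aux_pow (D / 2) h6
    omega
  omega

/-- `s(D) = 2·(D − 2)` holds exactly for `D ∈ {3, 4, 6, 10}`. -/
theorem susyDim_eq_two_mul_sub_two_iff (D : ℕ) (hD : 1 ≤ D) :
    (susyDim D : ℤ) = 2 * ((D : ℤ) - 2) ↔ (D = 3 ∨ D = 4 ∨ D = 6 ∨ D = 10) := by
  rcases Nat.lt_or_ge D 12 with h | h
  · interval_cases D <;> norm_num [susyDim]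
  · have hb := susyDim_big D h
    constructor
    · intro heq
      exfalso
      have : (2 * (D - 2) : ℕ) < susyDim D := hb
      have hc : ((2 * (D - 2) : ℕ) : ℤ) = 2 * ((D : ℤ) - 2) := by
        push_cast [Nat.cast_sub (by omega : 2 ≤ D)]; ring
      omega
    · intro hor; omega
end

section
/- For a Clifford datum (n, D, b, Γ^1, …, Γ^D), the fourth-order trace identity Σ_{i,j=1}^{D} tr( Γ^i · (b·Γ^j·b) · Γ^i · (b·Γ^j·b) ) = −(1/4)(n·D² − 2·n·D) holds (this is the contraction Γ^i_{αγ}Γ^i_{βδ}Γ_j^{αβ}Γ_j^{γδ} = −(1/4)(dim(S)·dim(V)² − 2·dim(S)·dim(V))). -/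
open Matrix BigOperators

/-- the fourth-order trace identity
`Σ_{i,j} tr(Γ^i·(b·Γ^j·b)·Γ^i·(b·Γ^j·b)) = −(1/4)(n·D² − 2·n·D)`. -/
theorem clifford_fourth_order_trace (n D : ℕ) (hn : 1 ≤ n) (hD : 1 ≤ D)
    (b : Matrix (Fin n) (Fin n) ℂ) (hb : IsUnit b) (hbsymm : b.IsSymm)
    (Γ : Fin D → Matrix (Fin n) (Fin n) ℂ) (hΓsymm : ∀ i, (Γ i).IsSymm)
    (hClifford : ∀ i j, Γ i * b * Γ j * b + Γ j * b * Γ i * b =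
      if i = j then (1 : Matrix (Fin n) (Fin n) ℂ) else 0) :
    ∑ i, ∑ j, (Γ i * (b * Γ j * b) * Γ i * (b * Γ j * b)).trace =
      -(1 / 4 : ℂ) * ((n : ℂ) * (D : ℂ) ^ 2 - 2 * (n : ℂ) * (D : ℂ)) := by
  have hsq : ∀ i, (Γ i * b) * (Γ i * b) = ((1 : ℂ)/2) • (1 : Matrix (Fin n) (Fin n) ℂ) := by
    intro i
    have h := hClifford i i
    rw [if_pos rfl] at h
    have h2 : (2 : ℂ) • ((Γ i * b) * (Γ i * b)) = 1 := by
      rw [two_smul]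
      calc (Γ i * b) * (Γ i * b) + (Γ i * b) * (Γ i * b)
          = Γ i * b * Γ i * b + Γ i * b * Γ i * b := by noncomm_ring
        _ = 1 := h
    have := congrArg (fun M => ((1:ℂ)/2) • M) h2
    simpa [smul_smul] using this
  have key : ∀ i j, (Γ i * (b * Γ j * b) * Γ i * (b * Γ j * b)).trace =
      if i = j then (n : ℂ)/4 else -((n : ℂ)/4) := by
    intro i j
    set A := Γ i * b with hA
    set B := Γ j * b with hB
    have hre : Γ i * (b * Γ j * b) * Γ i * (b * Γ j * b) = A * B * (A * B) := by
      rw [hA, hB]; noncomm_ring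
    by_cases hij : i = j
    · subst hij
      rw [if_pos rfl, hre, hsq i]
      simp [smul_smul, Matrix.trace_smul, Matrix.trace_one]
      ring
    · rw [if_neg hij, hre]
      have h := hClifford i j
      rw [if_neg hij] at h
      have hanti : B * A = -(A * B) := by
        have : A * B + B * A = 0 := by
          calc A * B + B * A = Γ i * b * Γ j * b + Γ j * b * Γ i * b := by
                rw [hA, hB]; noncomm_ring
            _ = 0 := h
        linear_combination (norm := noncomm_ring) this
      have : A * B * (A * B) = -((A * A) * (B * B)) := by
        calc A * B * (A * B) = A * (B * A) * B := by noncomm_ring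
          _ = A * (-(A * B)) * B := by rw [hanti]
          _ = -((A * A) * (B * B)) := by noncomm_ring
      rw [this, hsq i, hsq j]
      simp [smul_smul, Matrix.trace_smul, Matrix.trace_one]
      ring
  calc ∑ i, ∑ j, (Γ i * (b * Γ j * b) * Γ i * (b * Γ j * b)).trace
      = ∑ i : Fin D, ∑ j : Fin D, (if i = j then (n : ℂ)/4 else -((n : ℂ)/4)) := by
        exact Finset.sum_congr rfl fun i _ => Finset.sum_congr rfl fun j _ => key i j
    _ = ∑ i : Fin D, ∑ j : Fin D,
          ((if i = j then (n : ℂ)/2 else 0) - (n : ℂ)/4) := by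
        refine Finset.sum_congr rfl fun i _ => Finset.sum_congr rfl fun j _ => ?_
        by_cases hij : i = j <;> simp [hij] <;> ring
    _ = ∑ i : Fin D, ((n : ℂ)/2 - (D : ℂ) * ((n : ℂ)/4)) := by
        refine Finset.sum_congr rfl fun i _ => ?_
        rw [Finset.sum_sub_distrib, Finset.sum_ite_eq, Finset.sum_const]
        simp
    _ = (D : ℂ) * ((n : ℂ)/2 - (D : ℂ) * ((n : ℂ)/4)) := by
        rw [Finset.sum_const]; simp
    _ = -(1 / 4 : ℂ) * ((n : ℂ) * (D : ℂ) ^ 2 - 2 * (n : ℂ) * (D : ℂ)) := by ring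
end

section
/- Let (n, D, b, Γ^1, …, Γ^D) be a Clifford datum, let 𝔤 be any Lie algebra over ℂ, and let A_1, …, A_D ∈ 𝔤. Then for all spinor indices α, γ ∈ {1,…,n}: Σ_{i,k,l=1}^{D} ( Γ^i · (b·Γ^k·b) · Γ^l )_{αγ} · [A_i, [A_k, A_l]] = Σ_{l=1}^{D} (Γ^l)_{αγ} · Σ_{i=1}^{D} [A_i, [A_i, A_l]]. (This identity, obtained from the Jacobi identity and the Clifford identity, is the key step showing that the supersymmetry transformations preserve the Yang–Mills relations.) -/
open Matrix BigOperators

private lemma aux_sum {D : ℕ} {L : Type*} [LieRing L] [LieAlgebra ℂ L]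
    (m : Fin D → Fin D → Fin D → ℂ) (g : Fin D → ℂ) (A : Fin D → L)
    (hm1 : ∀ i k l, m i k l + m k i l = if i = k then g l else 0)
    (hm2 : ∀ i k l, m i k l + m i l k = if k = l then g i else 0) :
    ∑ i, ∑ k, ∑ l, m i k l • ⁅A i, ⁅A k, A l⁆⁆ =
      ∑ l, g l • ∑ i, ⁅A i, ⁅A i, A l⁆⁆ := by
  have hcyc : ∀ i k l, m k l i = m i k l - (if i = k then g l else 0)
      + (if i = l then g k else 0) := by
    intro i k l
    have a := hm1 i k l
    have c := hm2 k i l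
    linear_combination c - a
  have jac : ∀ i k l, ⁅A i, ⁅A k, A l⁆⁆ =
      ⁅A k, ⁅A i, A l⁆⁆ - ⁅A l, ⁅A i, A k⁆⁆ := by
    intro i k l
    rw [leibniz_lie, ← lie_skew ⁅A i, A k⁆ (A l)]
    abel
  have hcyc3 : ∀ F : Fin D → Fin D → Fin D → L,
      (∑ i, ∑ k, ∑ l, F k l i) = ∑ i, ∑ k, ∑ l, F i k l := by
    intro F
    calc (∑ i, ∑ k, ∑ l, F k l i) = ∑ k, ∑ i, ∑ l, F k l i := Finset.sum_comm
      _ = ∑ k, ∑ l, ∑ i, F k l i :=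
          Finset.sum_congr rfl fun k _ => Finset.sum_comm
      _ = ∑ i, ∑ k, ∑ l, F i k l := rfl
  set S : L := ∑ i, ∑ k, ∑ l, m i k l • ⁅A i, ⁅A k, A l⁆⁆ with hSdef
  set Tg : L := ∑ i, ∑ l, g l • ⁅A i, ⁅A i, A l⁆⁆ with hTgdef
  have hgoal : (∑ l, g l • ∑ i, ⁅A i, ⁅A i, A l⁆⁆) = Tg := by
    simp_rw [Finset.smul_sum]
    exact Finset.sum_comm
  -- Step A
  have hA : (∑ i, ∑ k, ∑ l, m i k l • ⁅A k, ⁅A i, A l⁆⁆) = Tg - S := by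
    calc (∑ i, ∑ k, ∑ l, m i k l • ⁅A k, ⁅A i, A l⁆⁆)
        = ∑ i, ∑ k, ∑ l, ((if i = k then g l else 0) • ⁅A k, ⁅A i, A l⁆⁆
            - m k i l • ⁅A k, ⁅A i, A l⁆⁆) := by
          refine Finset.sum_congr rfl fun i _ => Finset.sum_congr rfl
            fun k _ => Finset.sum_congr rfl fun l _ => ?_
          rw [← sub_smul]
          congr 1
          linear_combination hm1 i k l
      _ = (∑ i, ∑ k, ∑ l, (if i = k then g l else 0) • ⁅A k, ⁅A i, A l⁆⁆)
            - ∑ i, ∑ k, ∑ l, m k i l • ⁅A k, ⁅A i, A l⁆⁆ := by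
          simp only [Finset.sum_sub_distrib]
      _ = Tg - S := by
          congr 1
          · simp only [ite_smul, zero_smul]
            refine Finset.sum_congr rfl fun i _ => ?_
            rw [Finset.sum_comm]
            simp
          · exact Finset.sum_comm
  -- Step B
  have hB : (∑ i, ∑ k, ∑ l, m i k l • ⁅A l, ⁅A i, A k⁆⁆) = S - Tg + -Tg := by
    calc (∑ i, ∑ k, ∑ l, m i k l • ⁅A l, ⁅A i, A k⁆⁆)
        = ∑ i, ∑ k, ∑ l, m k l i • ⁅A i, ⁅A k, A l⁆⁆ :=
          (hcyc3 (fun a b c => m a b c • ⁅A c, ⁅A a, A b⁆⁆)).symm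
      _ = ∑ i, ∑ k, ∑ l, (m i k l • ⁅A i, ⁅A k, A l⁆⁆
            - (if i = k then g l else 0) • ⁅A i, ⁅A k, A l⁆⁆
            + (if i = l then g k else 0) • ⁅A i, ⁅A k, A l⁆⁆) := by
          refine Finset.sum_congr rfl fun i _ => Finset.sum_congr rfl
            fun k _ => Finset.sum_congr rfl fun l _ => ?_
          rw [← sub_smul, ← add_smul]
          congr 1
          linear_combination hcyc i k l
      _ = ((∑ i, ∑ k, ∑ l, m i k l • ⁅A i, ⁅A k, A l⁆⁆)
            - ∑ i, ∑ k, ∑ l, (if i = k then g l else 0) • ⁅A i, ⁅A k, A l⁆⁆)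
            + ∑ i, ∑ k, ∑ l, (if i = l then g k else 0) • ⁅A i, ⁅A k, A l⁆⁆ := by
          simp only [Finset.sum_add_distrib, Finset.sum_sub_distrib]
      _ = S - Tg + -Tg := by
          congr 1
          · congr 1
            simp only [ite_smul, zero_smul]
            refine Finset.sum_congr rfl fun i _ => ?_
            rw [Finset.sum_comm]
            simp
          · simp only [ite_smul, zero_smul]
            have : ∀ i k : Fin D,
                (∑ l, if i = l then g k • ⁅A i, ⁅A k, A l⁆⁆ else 0)
                  = -(g k • ⁅A i, ⁅A i, A k⁆⁆) := by
              intro i k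
              rw [Finset.sum_ite_eq]
              simp only [Finset.mem_univ, if_true]
              rw [← lie_skew (A k) (A i), lie_neg, smul_neg]
            simp only [this]
            simp only [Finset.sum_neg_distrib]
            rfl
  have hS : S = (Tg - S) - (S - Tg + -Tg) := by
    rw [← hA, ← hB]
    calc S = ∑ i, ∑ k, ∑ l, (m i k l • ⁅A k, ⁅A i, A l⁆⁆
          - m i k l • ⁅A l, ⁅A i, A k⁆⁆) := by
          rw [hSdef]
          refine Finset.sum_congr rfl fun i _ => Finset.sum_congr rfl
            fun k _ => Finset.sum_congr rfl fun l _ => ?_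
          rw [jac i k l, smul_sub]
      _ = _ := by simp only [Finset.sum_sub_distrib]
  have e3 : S + S + S = Tg + Tg + Tg := by
    nth_rewrite 1 [hS]
    abel
  have h3 : (3 : ℂ) • S = (3 : ℂ) • Tg := by
    rw [show (3 : ℂ) = 1 + 1 + 1 by norm_num]
    simp only [add_smul, one_smul]
    exact e3
  rw [hgoal]
  exact smul_right_injective L (by norm_num : (3 : ℂ) ≠ 0) h3

/-- for a Clifford datum, any complex Lie algebra `𝔤` and any
`A_1, …, A_D ∈ 𝔤`, one has
`Σ_{i,k,l} (Γ^i·(b·Γ^k·b)·Γ^l)_{αγ}·[A_i,[A_k,A_l]] = Σ_l (Γ^l)_{αγ}·Σ_i [A_i,[A_i,A_l]]`. -/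
theorem clifford_jacobi_identity (n D : ℕ) (hn : 1 ≤ n) (hD : 1 ≤ D)
    (b : Matrix (Fin n) (Fin n) ℂ) (hb : IsUnit b) (hbsymm : b.IsSymm)
    (Γ : Fin D → Matrix (Fin n) (Fin n) ℂ) (hΓsymm : ∀ i, (Γ i).IsSymm)
    (hClifford : ∀ i j, Γ i * b * Γ j * b + Γ j * b * Γ i * b =
      if i = j then (1 : Matrix (Fin n) (Fin n) ℂ) else 0)
    (L : Type*) [LieRing L] [LieAlgebra ℂ L] (A : Fin D → L) :
    ∀ α γ : Fin n,
      ∑ i, ∑ k, ∑ l, (Γ i * (b * Γ k * b) * Γ l) α γ • ⁅A i, ⁅A k, A l⁆⁆ =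
      ∑ l, (Γ l) α γ • ∑ i, ⁅A i, ⁅A i, A l⁆⁆ := by
  have h1 : ∀ i k l, Γ i * (b * Γ k * b) * Γ l + Γ k * (b * Γ i * b) * Γ l
      = if i = k then Γ l else 0 := by
    intro i k l
    have e : Γ i * (b * Γ k * b) * Γ l + Γ k * (b * Γ i * b) * Γ l
        = (Γ i * b * Γ k * b + Γ k * b * Γ i * b) * Γ l := by noncomm_ring
    rw [e, hClifford i k]
    split <;> simp
  have h2 : ∀ i k l, Γ i * (b * Γ k * b) * Γ l + Γ i * (b * Γ l * b) * Γ k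
      = if k = l then Γ i else 0 := by
    intro i k l
    apply hb.mul_right_cancel
    have e : (Γ i * (b * Γ k * b) * Γ l + Γ i * (b * Γ l * b) * Γ k) * b
        = Γ i * b * (Γ k * b * Γ l * b + Γ l * b * Γ k * b) := by noncomm_ring
    rw [e, hClifford k l]
    split <;> simp [mul_assoc]
  intro α γ
  have hm1 : ∀ i k l,
      (Γ i * (b * Γ k * b) * Γ l) α γ + (Γ k * (b * Γ i * b) * Γ l) α γ
        = if i = k then (Γ l) α γ else 0 := by
    intro i k l
    have := congrArg (fun M : Matrix (Fin n) (Fin n) ℂ => M α γ) (h1 i k l)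
    simpa [Matrix.add_apply,
      apply_ite (fun M : Matrix (Fin n) (Fin n) ℂ => M α γ)] using this
  have hm2 : ∀ i k l,
      (Γ i * (b * Γ k * b) * Γ l) α γ + (Γ i * (b * Γ l * b) * Γ k) α γ
        = if k = l then (Γ i) α γ else 0 := by
    intro i k l
    have := congrArg (fun M : Matrix (Fin n) (Fin n) ℂ => M α γ) (h2 i k l)
    simpa [Matrix.add_apply,
      apply_ite (fun M : Matrix (Fin n) (Fin n) ℂ => M α γ)] using this
  exact aux_sum (fun i k l => (Γ i * (b * Γ k * b) * Γ l) α γ)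
    (fun l => (Γ l) α γ) A hm1 hm2
end

section
/- Consider the complex of free graded R-modules R ←m− R⁴ ←d− R⁴ ←e− R, where the module next to R has generators f_1, f_2, g_1, g_2 of degree 1, the next module has generators e_{αβ} (α, β ∈ {1,2}) of degree 2, the last R has generator ω of degree 4, and m(f_α) = λ_α, m(g_β) = μ_β, d(e_{αβ}) = μ_β f_α − λ_α g_β, e(ω) = λ_2μ_2 e_{11} − λ_2μ_1 e_{12} − λ_1μ_2 e_{21} + λ_1μ_1 e_{22}. Then: m∘d = 0, d∘e = 0, e is injective, ker d = im e, the image of m is the maximal ideal (λ_1, λ_2, μ_1, μ_2) (so coker m is one-dimensional, concentrated in degree 0), and the cohomology ker m / im d in internal degree i has dimension 2(i−1) for every i ≥ 2 and vanishes for i < 2 (as a graded vector space it is Sym^{i−2}(ℂ²) ⊕ Sym^{i−2}(ℂ²)). -/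
open Matrix BigOperators MvPolynomial

noncomputable section

/-- The polynomial ring `ℂ[λ₁, λ₂, μ₁, μ₂]`. -/
abbrev Rll : Type := MvPolynomial (Fin 4) ℂ

/-- The variables `λ₁, λ₂`. -/
def lamv (a : Fin 2) : Rll := X ⟨a.1, by omega⟩

/-- The variables `μ₁, μ₂`. -/
def muv (a : Fin 2) : Rll := X ⟨a.1 + 2, by omega⟩

/-- `m : R⁴ → R`, `f_α ↦ λ_α`, `g_β ↦ μ_β`. -/
def llm : ((Fin 2 ⊕ Fin 2) → Rll) →ₗ[Rll] Rll :=
  (LinearEquiv.funUnique (Fin 1) Rll Rll).toLinearMap ∘ₗ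
    (Matrix.of fun (_ : Fin 1) (j : Fin 2 ⊕ Fin 2) =>
      Sum.elim (fun α => lamv α) (fun β => muv β) j).mulVecLin

/-- `d : R⁴ → R⁴`, `e_{αβ} ↦ μ_β f_α − λ_α g_β`. -/
def lld : (Fin 2 × Fin 2 → Rll) →ₗ[Rll] ((Fin 2 ⊕ Fin 2) → Rll) :=
  (Matrix.of fun (j : Fin 2 ⊕ Fin 2) (s : Fin 2 × Fin 2) =>
    Sum.elim
      (fun α => if α = s.1 then muv s.2 else 0)
      (fun β => if β = s.2 then -lamv s.1 else 0)
      j).mulVecLin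

/-- `e : R → R⁴`, `ω ↦ λ₂μ₂ e_{11} − λ₂μ₁ e_{12} − λ₁μ₂ e_{21} + λ₁μ₁ e_{22}`. -/
def lle : Rll →ₗ[Rll] (Fin 2 × Fin 2 → Rll) :=
  (Matrix.of fun (s : Fin 2 × Fin 2) (_ : Fin 1) =>
    if s.1 = 0 then
      (if s.2 = 0 then lamv 1 * muv 1 else -(lamv 1 * muv 0))
    else
      (if s.2 = 0 then -(lamv 0 * muv 1) else lamv 0 * muv 0)).mulVecLin ∘ₗ
    (LinearEquiv.funUnique (Fin 1) Rll Rll).symm.toLinearMap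

/-- The internal-degree-`d` piece of a free module generator of degree `g`. -/
def llh (g d : ℕ) : Submodule ℂ Rll :=
  if g ≤ d then homogeneousSubmodule (Fin 4) ℂ (d - g) else ⊥

/-- Degree-`i` cycles at the module with generators `f_α, g_β` of degree 1. -/
def llZ (i : ℕ) : Submodule ℂ ((Fin 2 ⊕ Fin 2) → Rll) :=
  LinearMap.ker (llm.restrictScalars ℂ) ⊓
    Submodule.pi Set.univ fun _ : Fin 2 ⊕ Fin 2 => llh 1 i

/-- Degree-`i` boundaries: the image under `d` of the degree-`i` piece of the
module with generators `e_{αβ}` of degree 2. -/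
def llB (i : ℕ) : Submodule ℂ ((Fin 2 ⊕ Fin 2) → Rll) :=
  (Submodule.pi Set.univ fun _ : Fin 2 × Fin 2 => llh 2 i).map
    (lld.restrictScalars ℂ)

@[simp] lemma lamv_zero : lamv 0 = X 0 := rfl
@[simp] lemma lamv_one : lamv 1 = X 1 := rfl
@[simp] lemma muv_zero : muv 0 = X 2 := rfl
@[simp] lemma muv_one : muv 1 = X 3 := rfl

lemma llm_apply (v : (Fin 2 ⊕ Fin 2) → Rll) :
    llm v = X 0 * v (.inl 0) + X 1 * v (.inl 1) + X 2 * v (.inr 0) + X 3 * v (.inr 1) := by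
  simp [llm, mulVecLin_apply, mulVec, dotProduct, Fintype.sum_sum_type, Fin.sum_univ_two]
  ring

lemma lld_apply_inl (E : Fin 2 × Fin 2 → Rll) (a : Fin 2) :
    lld E (.inl a) = X 2 * E (a, 0) + X 3 * E (a, 1) := by
  fin_cases a <;>
  · simp [lld, mulVecLin_apply, mulVec, dotProduct, Fintype.sum_prod_type, Fin.sum_univ_two]
    try ring

lemma lld_apply_inr (E : Fin 2 × Fin 2 → Rll) (b : Fin 2) :
    lld E (.inr b) = -(X 0 * E (0, b)) - X 1 * E (1, b) := by
  fin_cases b <;>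
  · simp [lld, mulVecLin_apply, mulVec, dotProduct, Fintype.sum_prod_type, Fin.sum_univ_two]
    try ring

lemma lle_apply (p : Rll) (s : Fin 2 × Fin 2) :
    lle p s = (if s.1 = 0 then (if s.2 = 0 then X 1 * X 3 else -(X 1 * X 2))
     else (if s.2 = 0 then -(X 0 * X 3) else X 0 * X 2)) * p := by
  rcases s with ⟨a, b⟩
  fin_cases a <;> fin_cases b <;>
    simp [lle, mulVecLin_apply, mulVec, dotProduct, Fin.sum_univ_one] <;> try ring

lemma lle_injective : Function.Injective lle := by
  intro p q h
  have h0 := congrFun h ((0 : Fin 2), (0 : Fin 2))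
  rw [lle_apply, lle_apply] at h0
  have h1 : X 1 * X 3 * p = X 1 * X 3 * q := h0
  exact mul_left_cancel₀ (mul_ne_zero (X_ne_zero 1) (X_ne_zero 3)) h1

/-- Kill the variables in `s`. -/
def killv (s : Finset (Fin 4)) : Rll →ₐ[ℂ] Rll :=
  aeval fun i => if i ∈ s then 0 else X i

lemma killv_monomial_of_forall (s : Finset (Fin 4)) (m' : Fin 4 →₀ ℕ) (c : ℂ)
    (hm' : ∀ i ∈ s, m' i = 0) : killv s (monomial m' c) = monomial m' c := by
  rw [killv, aeval_monomial]
  have key : (m'.prod fun i k => (if i ∈ s then (0:Rll) else X i) ^ k)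
      = m'.prod fun i k => X i ^ k := by
    apply Finsupp.prod_congr
    intro i hi
    have : i ∉ s := fun h => (Finsupp.mem_support_iff.mp hi) (hm' i h)
    simp [this]
  rw [key, algebraMap_eq, ← monomial_eq]

lemma killv_monomial_of_exists (s : Finset (Fin 4)) (m' : Fin 4 →₀ ℕ) (c : ℂ)
    {i : Fin 4} (his : i ∈ s) (hmi : m' i ≠ 0) : killv s (monomial m' c) = 0 := by
  rw [killv, aeval_monomial]
  have : (m'.prod fun i k => (if i ∈ s then (0:Rll) else X i) ^ k) = 0 := by
    apply Finset.prod_eq_zero (Finsupp.mem_support_iff.mpr hmi)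
    simp [his, hmi]
  rw [this, mul_zero]

lemma coeff_killv (s : Finset (Fin 4)) (p : Rll) (m : Fin 4 →₀ ℕ) :
    coeff m (killv s p) = if ∀ i ∈ s, m i = 0 then coeff m p else 0 := by
  induction p using MvPolynomial.induction_on' with
  | add p q hp hq =>
    simp only [map_add, coeff_add, hp, hq]
    split <;> simp
  | monomial m' c =>
    by_cases hm' : ∀ i ∈ s, m' i = 0
    · rw [killv_monomial_of_forall s m' c hm']
      by_cases h : ∀ i ∈ s, m i = 0
      · rw [if_pos h]
      · rw [if_neg h, coeff_monomial, if_neg]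
        rintro rfl
        exact h hm'
    · push_neg at hm'
      obtain ⟨i, his, hmi⟩ := hm'
      rw [killv_monomial_of_exists s m' c his hmi, coeff_zero]
      by_cases h : ∀ i ∈ s, m i = 0
      · rw [if_pos h, coeff_monomial, if_neg]
        rintro rfl
        exact hmi (h i his)
      · rw [if_neg h]

lemma killv_eq_zero_iff (s : Finset (Fin 4)) (p : Rll) :
    killv s p = 0 ↔ p ∈ Ideal.span ((X : Fin 4 → Rll) '' s) := by
  rw [mem_ideal_span_X_image]
  constructor
  · intro h m hm
    by_contra hc
    push_neg at hc
    have h2 := coeff_killv s p m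
    rw [h, coeff_zero, if_pos (fun i hi => by
      by_contra h0
      exact h0 (hc i hi))] at h2
    exact (mem_support_iff.mp hm) h2.symm
  · intro h
    ext m
    rw [coeff_killv, coeff_zero]
    by_cases hc : ∀ i ∈ s, m i = 0
    · rw [if_pos hc]
      by_contra h0
      obtain ⟨i, his, hi⟩ := h m (mem_support_iff.mpr h0)
      exact hi (hc i his)
    · rw [if_neg hc]

lemma killv_X (s : Finset (Fin 4)) (i : Fin 4) :
    killv s (X i) = if i ∈ s then 0 else X i := by
  simp [killv]

/-- From `X i * p + X j * q = 0` with `i ≠ j` we get `X j ∣ p`. -/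
lemma X_dvd_of_rel {i j : Fin 4} (hij : i ≠ j) {p q : Rll}
    (h : X i * p + X j * q = 0) : X j ∣ p := by
  have hk : killv {j} (X i * p + X j * q) = 0 := by rw [h, map_zero]
  rw [map_add, _root_.map_mul, _root_.map_mul, killv_X, killv_X, if_neg (by simpa using hij),
    if_pos (Finset.mem_singleton_self j), zero_mul, add_zero] at hk
  have hp : killv {j} p = 0 :=
    (mul_eq_zero.mp hk).resolve_left (X_ne_zero i)
  rw [killv_eq_zero_iff] at hp
  rw [Finset.coe_singleton, Set.image_singleton] at hp
  exact Ideal.mem_span_singleton.mp hp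

lemma lld_comp_lle : lld ∘ₗ lle = 0 := by
  apply LinearMap.ext_ring
  funext j
  rcases j with a | a <;> fin_cases a <;>
    simp [lld, lle, mulVecLin_apply, mulVec, dotProduct, Fintype.sum_sum_type,
      Fintype.sum_prod_type, Fin.sum_univ_two, Fin.sum_univ_one] <;> try ring

lemma ker_lld_eq : LinearMap.ker lld = LinearMap.range lle := by
  apply le_antisymm
  · intro x hx
    rw [LinearMap.mem_ker] at hx
    have h0 : ∀ a : Fin 2, X 2 * x (a, 0) + X 3 * x (a, 1) = 0 := by
      intro a
      rw [← lld_apply_inl, hx]; rfl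
    have h1 : ∀ b : Fin 2, X 0 * x (0, b) + X 1 * x (1, b) = 0 := by
      intro b
      have := congrFun hx (Sum.inr b)
      rw [lld_apply_inr] at this
      simp only [Pi.zero_apply] at this
      linear_combination -this
    -- x (a, 0) = X 3 * P a
    have hP : ∀ a : Fin 2, ∃ P : Rll, x (a, 0) = X 3 * P ∧ x (a, 1) = -(X 2 * P) := by
      intro a
      obtain ⟨P, hP⟩ := X_dvd_of_rel (by decide : (2:Fin 4) ≠ 3) (h0 a)
      refine ⟨P, hP, ?_⟩
      have := h0 a
      rw [hP] at this
      have h3 : X 3 * (X 2 * P + x (a, 1)) = 0 := by ring_nf; linear_combination this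
      have := (mul_eq_zero.mp h3).resolve_left (X_ne_zero 3)
      linear_combination this
    obtain ⟨P0, hP00, hP01⟩ := hP 0
    obtain ⟨P1, hP10, hP11⟩ := hP 1
    have hq : X 0 * P0 + X 1 * P1 = 0 := by
      have := h1 0
      rw [hP00, hP10] at this
      have h3 : X 3 * (X 0 * P0 + X 1 * P1) = 0 := by linear_combination this
      exact (mul_eq_zero.mp h3).resolve_left (X_ne_zero 3)
    obtain ⟨Q, hQ⟩ := X_dvd_of_rel (by decide : (0:Fin 4) ≠ 1) hq
    have hP1Q : P1 = -(X 0 * Q) := by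
      rw [hQ] at hq
      have h3 : X 1 * (X 0 * Q + P1) = 0 := by linear_combination hq
      have := (mul_eq_zero.mp h3).resolve_left (X_ne_zero 1)
      linear_combination this
    have e00 : lle Q (0, 0) = x (0, 0) := by
      rw [lle_apply, hP00, hQ]
      norm_num
      try ring
    have e01 : lle Q (0, 1) = x (0, 1) := by
      rw [lle_apply, hP01, hQ]
      norm_num
      try ring
    have e10 : lle Q (1, 0) = x (1, 0) := by
      rw [lle_apply, hP10, hP1Q]
      norm_num
      try ring
    have e11 : lle Q (1, 1) = x (1, 1) := by
      rw [lle_apply, hP11, hP1Q]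
      norm_num
      try ring
    refine ⟨Q, funext fun s => ?_⟩
    rcases s with ⟨a, b⟩
    fin_cases a <;> fin_cases b
    · exact e00
    · exact e01
    · exact e10
    · exact e11
  · rintro x ⟨p, rfl⟩
    rw [LinearMap.mem_ker, ← LinearMap.comp_apply, lld_comp_lle, LinearMap.zero_apply]

lemma llm_comp_lld : llm ∘ₗ lld = 0 := by
  ext x j
  simp [llm, lld, mulVecLin_apply, mulVec, dotProduct, Fintype.sum_sum_type,
    Fintype.sum_prod_type, Fin.sum_univ_two]
  try ring

lemma range_llm : LinearMap.range llm = Ideal.span {lamv 0, lamv 1, muv 0, muv 1} := by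
  apply le_antisymm
  · rintro y ⟨v, rfl⟩
    rw [llm_apply]
    have h0 : (X 0 : Rll) ∈ Ideal.span {lamv 0, lamv 1, muv 0, muv 1} :=
      Ideal.subset_span (by simp)
    have h1 : (X 1 : Rll) ∈ Ideal.span {lamv 0, lamv 1, muv 0, muv 1} :=
      Ideal.subset_span (by simp)
    have h2 : (X 2 : Rll) ∈ Ideal.span {lamv 0, lamv 1, muv 0, muv 1} :=
      Ideal.subset_span (by simp)
    have h3 : (X 3 : Rll) ∈ Ideal.span {lamv 0, lamv 1, muv 0, muv 1} :=
      Ideal.subset_span (by simp)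
    exact add_mem (add_mem (add_mem (Ideal.mul_mem_right _ _ h0) (Ideal.mul_mem_right _ _ h1))
      (Ideal.mul_mem_right _ _ h2)) (Ideal.mul_mem_right _ _ h3)
  · rw [Ideal.span_le]
    rintro y hy
    simp only [Set.mem_insert_iff, Set.mem_singleton_iff] at hy
    rcases hy with rfl | rfl | rfl | rfl
    · exact ⟨fun j => if j = Sum.inl 0 then 1 else 0, by rw [llm_apply]; simp⟩
    · exact ⟨fun j => if j = Sum.inl 1 then 1 else 0, by rw [llm_apply]; simp⟩
    · exact ⟨fun j => if j = Sum.inr 0 then 1 else 0, by rw [llm_apply]; simp⟩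
    · exact ⟨fun j => if j = Sum.inr 1 then 1 else 0, by rw [llm_apply]; simp⟩

lemma span_pair_of_killv_lam {p : Rll} (h : killv {2,3} p = 0) :
    ∃ a b : Rll, a * X 2 + b * X 3 = p := by
  rw [killv_eq_zero_iff] at h
  rw [show ((X : Fin 4 → Rll) '' ↑({2,3} : Finset (Fin 4))) = {X 2, X 3} by
    simp [Finset.coe_insert, Set.image_insert_eq]] at h
  exact Ideal.mem_span_pair.mp h

lemma span_pair_of_killv_mu {p : Rll} (h : killv {0,1} p = 0) :
    ∃ a b : Rll, a * X 0 + b * X 1 = p := by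
  rw [killv_eq_zero_iff] at h
  rw [show ((X : Fin 4 → Rll) '' ↑({0,1} : Finset (Fin 4))) = {X 0, X 1} by
    simp [Finset.coe_insert, Set.image_insert_eq]] at h
  exact Ideal.mem_span_pair.mp h

lemma killv_mul_X_left (s : Finset (Fin 4)) (i : Fin 4) (his : i ∈ s) (p : Rll) :
    killv s (X i * p) = 0 := by
  rw [_root_.map_mul, killv_X, if_pos his, zero_mul]

lemma middle_exact (F G : Fin 2 → Rll)
    (hcyc : X 0 * F 0 + X 1 * F 1 + X 2 * G 0 + X 3 * G 1 = 0)
    (hF : ∀ a, killv {2,3} (F a) = 0) (hG : ∀ b, killv {0,1} (G b) = 0) :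
    ∃ E : Fin 2 × Fin 2 → Rll, lld E = Sum.elim F G := by
  obtain ⟨A0, B0, h0⟩ := span_pair_of_killv_lam (hF 0)
  obtain ⟨A1, B1, h1⟩ := span_pair_of_killv_lam (hF 1)
  -- the corrected G
  set G'0 : Rll := G 0 + X 0 * A0 + X 1 * A1 with hG'0
  set G'1 : Rll := G 1 + X 0 * B0 + X 1 * B1 with hG'1
  have hrel : X 2 * G'0 + X 3 * G'1 = 0 := by
    rw [hG'0, hG'1]
    linear_combination hcyc + X 0 * h0 + X 1 * h1
  have hkG'0 : killv {0,1} G'0 = 0 := by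
    rw [hG'0, map_add, map_add, hG 0,
      killv_mul_X_left _ 0 (by decide), killv_mul_X_left _ 1 (by decide)]
    ring
  obtain ⟨Cc, hC⟩ : X 3 ∣ G'0 := X_dvd_of_rel (by decide : (2:Fin 4) ≠ 3) hrel
  have hC1 : G'1 = -(X 2 * Cc) := by
    rw [hC] at hrel
    have h3 : X 3 * (X 2 * Cc + G'1) = 0 := by linear_combination hrel
    have := (mul_eq_zero.mp h3).resolve_left (X_ne_zero 3)
    linear_combination this
  have hkC : killv {0,1} Cc = 0 := by
    have := hkG'0
    rw [hC, _root_.map_mul, killv_X, if_neg (by decide)] at this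
    exact (mul_eq_zero.mp this).resolve_left (X_ne_zero 3)
  obtain ⟨D0, D1, hD⟩ := span_pair_of_killv_mu hkC
  refine ⟨fun s => if s.2 = 0 then (if s.1 = 0 then A0 - X 3 * D0 else A1 - X 3 * D1)
    else (if s.1 = 0 then B0 + X 2 * D0 else B1 + X 2 * D1), ?_⟩
  have hC' : G 0 = X 3 * Cc - X 0 * A0 - X 1 * A1 := by rw [← hC, hG'0]; ring
  have hC1' : G 1 = -(X 2 * Cc) - X 0 * B0 - X 1 * B1 := by rw [← hC1, hG'1]; ring
  funext j
  rcases j with a | b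
  · fin_cases a <;>
    · rw [lld_apply_inl]
      norm_num
      try linear_combination h0
      try linear_combination h1
  · fin_cases b <;>
    · rw [lld_apply_inr]
      norm_num
      try linear_combination X 3 * hD - hC'
      try linear_combination -(X 2 * hD) - hC1'


lemma deg4 (m : Fin 4 →₀ ℕ) : m.degree = ∑ i : Fin 4, m i :=
  Finset.sum_subset (Finset.subset_univ _) (fun i _ hi => Finsupp.notMem_support_iff.mp hi)

lemma degree_sub_single (m : Fin 4 →₀ ℕ) (i : Fin 4) (hmi : m i ≠ 0) :
    (m - Finsupp.single i 1).degree + 1 = m.degree := by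
  have hm : m = (m - Finsupp.single i 1) + Finsupp.single i 1 := by
    ext j
    rw [Finsupp.add_apply, Finsupp.tsub_apply, Finsupp.single_apply]
    by_cases h : i = j
    · subst h; simp only [eq_self_iff_true, if_true]; omega
    · simp [h]
  conv_rhs => rw [hm]
  rw [deg4, deg4]
  simp only [Finsupp.add_apply]
  rw [Finset.sum_add_distrib]
  simp [Finsupp.single_apply]

lemma homComp_X_mul (i : Fin 4) (n : ℕ) (q : Rll) :
    homogeneousComponent (n+1) (X i * q) = X i * homogeneousComponent n q := by
  ext m
  rw [coeff_homogeneousComponent, coeff_X_mul', coeff_X_mul']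
  by_cases hi : i ∈ m.support
  · rw [if_pos hi, if_pos hi, coeff_homogeneousComponent]
    have hdeg := degree_sub_single m i (Finsupp.mem_support_iff.mp hi)
    by_cases h : (m - Finsupp.single i 1).degree = n
    · rw [if_pos h, if_pos (by omega)]
    · rw [if_neg h, if_neg (by omega)]
  · rw [if_neg hi, if_neg hi, ite_self]

/-- The monomial attached to a coordinate of `ψ`. -/
def psiMon (i : ℕ) (j : Fin (i-1) ⊕ Fin (i-1)) : Fin 4 →₀ ℕ :=
  Sum.elim (fun k => Finsupp.single 0 k.1 + Finsupp.single 1 (i-1-k.1))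
           (fun k => Finsupp.single 2 k.1 + Finsupp.single 3 (i-1-k.1)) j

/-- The coordinate-extraction map. -/
def psi (i : ℕ) : ((Fin 2 ⊕ Fin 2) → Rll) →ₗ[ℂ] ((Fin (i-1) ⊕ Fin (i-1)) → ℂ) :=
  LinearMap.pi fun j => (lcoeff ℂ (psiMon i j)) ∘ₗ
    LinearMap.proj (Sum.elim (fun _ => Sum.inl 0) (fun _ => Sum.inr 0) j)

lemma psi_apply_inl (i : ℕ) (x : (Fin 2 ⊕ Fin 2) → Rll) (k : Fin (i-1)) :
    psi i x (Sum.inl k) = coeff (psiMon i (Sum.inl k)) (x (Sum.inl 0)) := rfl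

lemma psi_apply_inr (i : ℕ) (x : (Fin 2 ⊕ Fin 2) → Rll) (k : Fin (i-1)) :
    psi i x (Sum.inr k) = coeff (psiMon i (Sum.inr k)) (x (Sum.inr 0)) := rfl

lemma psiMon_inl_apply (i : ℕ) (k : Fin (i-1)) (j : Fin 4) :
    psiMon i (Sum.inl k) j =
      (if (0:Fin 4) = j then k.1 else 0) + (if (1:Fin 4) = j then i-1-k.1 else 0) := by
  simp only [psiMon, Sum.elim_inl, Finsupp.add_apply, Finsupp.single_apply]

lemma psiMon_inr_apply (i : ℕ) (k : Fin (i-1)) (j : Fin 4) :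
    psiMon i (Sum.inr k) j =
      (if (2:Fin 4) = j then k.1 else 0) + (if (3:Fin 4) = j then i-1-k.1 else 0) := by
  simp only [psiMon, Sum.elim_inr, Finsupp.add_apply, Finsupp.single_apply]

/-- boundaries are killed by `ψ`. -/
lemma psi_lld (i : ℕ) (E : Fin 2 × Fin 2 → Rll) : psi i (lld E) = 0 := by
  funext j
  rcases j with k | k
  · rw [psi_apply_inl, lld_apply_inl, Pi.zero_apply, coeff_add,
      coeff_X_mul', coeff_X_mul', if_neg, if_neg, add_zero]
    · rw [Finsupp.mem_support_iff]
      simp [psiMon_inr_apply, psiMon_inl_apply]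
    · rw [Finsupp.mem_support_iff]
      simp [psiMon_inr_apply, psiMon_inl_apply]
  · rw [psi_apply_inr, lld_apply_inr, Pi.zero_apply, coeff_sub, coeff_neg,
      coeff_X_mul', coeff_X_mul', if_neg, if_neg]
    · ring
    · rw [Finsupp.mem_support_iff]
      simp [psiMon_inr_apply]
    · rw [Finsupp.mem_support_iff]
      simp [psiMon_inr_apply]

lemma degree_single_add_single (v w : Fin 4) (hvw : v ≠ w) (u t : ℕ) :
    (Finsupp.single v u + Finsupp.single w t).degree = u + t := by
  rw [deg4]
  simp only [Finsupp.add_apply, Finsupp.single_apply, Fin.sum_univ_four]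
  fin_cases v <;> fin_cases w <;> simp_all <;> omega

lemma mon_coeff (v w : Fin 4) (hvw : v ≠ w) (M N : ℕ) (c : Fin N → ℂ) (k : Fin N) :
    coeff (Finsupp.single v k.1 + Finsupp.single w (M - k.1))
      (∑ j : Fin N, monomial (Finsupp.single v j.1 + Finsupp.single w (M - j.1)) (c j))
      = c k := by
  rw [coeff_sum]
  rw [Finset.sum_eq_single_of_mem k (Finset.mem_univ k)]
  · rw [coeff_monomial, if_pos rfl]
  · intro j _ hjk
    rw [coeff_monomial, if_neg]
    intro h
    have := DFunLike.congr_fun h v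
    simp only [Finsupp.add_apply, Finsupp.single_apply, eq_self_iff_true, if_true,
      if_neg (Ne.symm hvw), add_zero] at this
    exact hjk (Fin.ext this)

lemma isHomogeneous_mon_sum (v w : Fin 4) (hvw : v ≠ w) (M N : ℕ) (hN : ∀ k : Fin N, k.1 + (M - k.1) = M)
    (c : Fin N → ℂ) :
    IsHomogeneous (∑ j : Fin N, monomial (Finsupp.single v j.1 + Finsupp.single w (M - j.1)) (c j)) M := by
  apply IsHomogeneous.sum
  intro j _
  apply isHomogeneous_monomial
  rw [degree_single_add_single v w hvw, hN j]

lemma psi_surj_on_Z (i : ℕ) (hi : 2 ≤ i) (c : (Fin (i-1) ⊕ Fin (i-1)) → ℂ) :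
    ∃ x, x ∈ llZ i ∧ psi i x = c := by
  set r : Rll := ∑ j : Fin (i-1),
    monomial (Finsupp.single 0 j.1 + Finsupp.single 1 (i-2-j.1)) (c (Sum.inl j)) with hr
  set t : Rll := ∑ j : Fin (i-1),
    monomial (Finsupp.single 2 j.1 + Finsupp.single 3 (i-2-j.1)) (c (Sum.inr j)) with ht
  have hrh : IsHomogeneous r (i-2) :=
    isHomogeneous_mon_sum 0 1 (by decide) _ _ (fun k => by have := k.2; omega) _
  have hth : IsHomogeneous t (i-2) :=
    isHomogeneous_mon_sum 2 3 (by decide) _ _ (fun k => by have := k.2; omega) _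
  have hmem : ∀ p : Rll, IsHomogeneous p (i-1) → p ∈ llh 1 i := by
    intro p hp
    rw [llh, if_pos (by omega)]
    exact (mem_homogeneousSubmodule _ _).mpr hp
  have hone : 1 + (i-2) = i - 1 := by omega
  refine ⟨Sum.elim (fun a => if a = 0 then X 1 * r else -(X 0 * r))
    (fun b => if b = 0 then X 3 * t else -(X 2 * t)), Submodule.mem_inf.mpr ⟨?_, ?_⟩, ?_⟩
  · rw [LinearMap.mem_ker]
    show llm _ = 0
    rw [llm_apply]
    simp only [Sum.elim_inl, Sum.elim_inr, eq_self_iff_true, if_true,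
      if_neg (by decide : (1:Fin 2) ≠ 0)]
    ring
  · intro j _
    rcases j with a | b
    · fin_cases a
      · simp only [Sum.elim_inl, eq_self_iff_true, if_true]
        exact hmem _ (hone ▸ (isHomogeneous_X _ _).mul hrh)
      · simp only [Sum.elim_inl, if_neg (by decide : (1:Fin 2) ≠ 0)]
        exact hmem _ (IsHomogeneous.neg (hone ▸ (isHomogeneous_X _ _).mul hrh))
    · fin_cases b
      · simp only [Sum.elim_inr, eq_self_iff_true, if_true]
        exact hmem _ (hone ▸ (isHomogeneous_X _ _).mul hth)
      · simp only [Sum.elim_inr, if_neg (by decide : (1:Fin 2) ≠ 0)]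
        exact hmem _ (IsHomogeneous.neg (hone ▸ (isHomogeneous_X _ _).mul hth))
  · funext j
    rcases j with k | k
    · rw [psi_apply_inl]
      simp only [Sum.elim_inl, eq_self_iff_true, if_true]
      rw [coeff_X_mul', if_pos]
      · have hm : psiMon i (Sum.inl k) - Finsupp.single 1 1
            = Finsupp.single 0 k.1 + Finsupp.single 1 (i-2-k.1) := by
          ext j
          rw [Finsupp.tsub_apply]
          rw [psiMon_inl_apply]
          simp only [Finsupp.add_apply, Finsupp.single_apply]
          have := k.2
          fin_cases j <;> simp <;> omega
        rw [hm, hr]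
        have := mon_coeff 0 1 (by decide) (i-2) (i-1) (fun j => c (Sum.inl j)) k
        exact this
      · rw [Finsupp.mem_support_iff, psiMon_inl_apply]
        have := k.2
        simp
        omega
    · rw [psi_apply_inr]
      simp only [Sum.elim_inr, eq_self_iff_true, if_true]
      rw [coeff_X_mul', if_pos]
      · have hm : psiMon i (Sum.inr k) - Finsupp.single 3 1
            = Finsupp.single 2 k.1 + Finsupp.single 3 (i-2-k.1) := by
          ext j
          rw [Finsupp.tsub_apply]
          rw [psiMon_inr_apply]
          simp only [Finsupp.add_apply, Finsupp.single_apply]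
          have := k.2
          fin_cases j <;> simp <;> omega
        rw [hm, ht]
        have := mon_coeff 2 3 (by decide) (i-2) (i-1) (fun j => c (Sum.inr j)) k
        exact this
      · rw [Finsupp.mem_support_iff, psiMon_inr_apply]
        have := k.2
        simp
        omega

lemma killv_cyc_lam {x : (Fin 2 ⊕ Fin 2) → Rll}
    (hcyc : X 0 * x (.inl 0) + X 1 * x (.inl 1) + X 2 * x (.inr 0) + X 3 * x (.inr 1) = 0) :
    X 0 * killv {2,3} (x (.inl 0)) + X 1 * killv {2,3} (x (.inl 1)) = 0 := by
  have h := congrArg (killv {2,3}) hcyc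
  rw [map_add, map_add, map_add, _root_.map_mul, _root_.map_mul, _root_.map_mul,
    _root_.map_mul, killv_X, killv_X, killv_X, killv_X, map_zero,
    if_neg (by decide), if_neg (by decide), if_pos (by decide), if_pos (by decide)] at h
  linear_combination h

lemma killv_cyc_mu {x : (Fin 2 ⊕ Fin 2) → Rll}
    (hcyc : X 0 * x (.inl 0) + X 1 * x (.inl 1) + X 2 * x (.inr 0) + X 3 * x (.inr 1) = 0) :
    X 2 * killv {0,1} (x (.inr 0)) + X 3 * killv {0,1} (x (.inr 1)) = 0 := by
  have h := congrArg (killv {0,1}) hcyc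
  rw [map_add, map_add, map_add, _root_.map_mul, _root_.map_mul, _root_.map_mul,
    _root_.map_mul, killv_X, killv_X, killv_X, killv_X, map_zero,
    if_pos (by decide), if_pos (by decide), if_neg (by decide), if_neg (by decide)] at h
  linear_combination h

lemma mem_llB_of_psi_zero (i : ℕ) (hi : 2 ≤ i) (x : (Fin 2 ⊕ Fin 2) → Rll)
    (hx : x ∈ llZ i) (hpsi : psi i x = 0) : x ∈ llB i := by
  obtain ⟨hker, hpi⟩ := Submodule.mem_inf.mp hx
  have hhom : ∀ j, IsHomogeneous (x j) (i-1) := by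
    intro j
    have := hpi j (Set.mem_univ j)
    rw [llh, if_pos (by omega : 1 ≤ i)] at this
    exact (mem_homogeneousSubmodule _ _).mp this
  have hcyc : X 0 * x (.inl 0) + X 1 * x (.inl 1)
      + X 2 * x (.inr 0) + X 3 * x (.inr 1) = 0 := by
    have : llm x = 0 := hker
    rw [llm_apply] at this
    exact this
  have hX := killv_cyc_lam hcyc
  have hY := killv_cyc_mu hcyc
  -- vanishing of the pure λ-part of the `f` components
  have hp0 : killv {2,3} (x (.inl 0)) = 0 := by
    ext m
    rw [coeff_killv, coeff_zero]
    by_cases hpure : ∀ j ∈ ({2,3} : Finset (Fin 4)), m j = 0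
    · rw [if_pos hpure]
      by_cases hdeg : m.degree = i - 1
      · have hm2 : m 2 = 0 := hpure 2 (by decide)
        have hm3 : m 3 = 0 := hpure 3 (by decide)
        have hsum : m 0 + m 1 = i - 1 := by
          rw [deg4, Fin.sum_univ_four, hm2, hm3] at hdeg
          omega
        by_cases h1 : m 1 = 0
        · -- top coefficient, use the relation hX
          have h := congrArg (coeff (Finsupp.single 0 1 + m)) hX
          rw [coeff_add, coeff_X_mul, coeff_X_mul', if_neg, coeff_zero, add_zero] at h
          · rw [coeff_killv, if_pos hpure] at h
            exact h
          · rw [Finsupp.mem_support_iff, Finsupp.add_apply, Finsupp.single_apply,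
              if_neg (by decide : ¬ ((0:Fin 4) = 1))]
            simp [h1]
        · -- a ψ coordinate
          have hk : m 0 < i - 1 := by omega
          have h := congrFun hpsi (Sum.inl ⟨m 0, hk⟩)
          rw [psi_apply_inl, Pi.zero_apply] at h
          have hmon : psiMon i (Sum.inl ⟨m 0, hk⟩) = m := by
            ext j
            rw [psiMon_inl_apply]
            fin_cases j <;> simp <;> omega
          rw [hmon] at h
          exact h
      · exact (hhom (.inl 0)).coeff_eq_zero hdeg
    · rw [if_neg hpure]
  have hp1 : killv {2,3} (x (.inl 1)) = 0 := by
    rw [hp0, mul_zero, zero_add] at hX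
    exact (mul_eq_zero.mp hX).resolve_left (X_ne_zero 1)
  -- vanishing of the pure μ-part of the `g` components
  have hq0 : killv {0,1} (x (.inr 0)) = 0 := by
    ext m
    rw [coeff_killv, coeff_zero]
    by_cases hpure : ∀ j ∈ ({0,1} : Finset (Fin 4)), m j = 0
    · rw [if_pos hpure]
      by_cases hdeg : m.degree = i - 1
      · have hm0 : m 0 = 0 := hpure 0 (by decide)
        have hm1 : m 1 = 0 := hpure 1 (by decide)
        have hsum : m 2 + m 3 = i - 1 := by
          rw [deg4, Fin.sum_univ_four, hm0, hm1] at hdeg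
          omega
        by_cases h3 : m 3 = 0
        · have h := congrArg (coeff (Finsupp.single 2 1 + m)) hY
          rw [coeff_add, coeff_X_mul, coeff_X_mul', if_neg, coeff_zero, add_zero] at h
          · rw [coeff_killv, if_pos hpure] at h
            exact h
          · rw [Finsupp.mem_support_iff, Finsupp.add_apply, Finsupp.single_apply,
              if_neg (by decide : ¬ ((2:Fin 4) = 3))]
            simp [h3]
        · have hk : m 2 < i - 1 := by omega
          have h := congrFun hpsi (Sum.inr ⟨m 2, hk⟩)
          rw [psi_apply_inr, Pi.zero_apply] at h
          have hmon : psiMon i (Sum.inr ⟨m 2, hk⟩) = m := by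
            ext j
            rw [psiMon_inr_apply]
            fin_cases j <;> simp <;> omega
          rw [hmon] at h
          exact h
      · exact (hhom (.inr 0)).coeff_eq_zero hdeg
    · rw [if_neg hpure]
  have hq1 : killv {0,1} (x (.inr 1)) = 0 := by
    rw [hq0, mul_zero, zero_add] at hY
    exact (mul_eq_zero.mp hY).resolve_left (X_ne_zero 3)
  -- now apply the ungraded exactness and take homogeneous components
  obtain ⟨E, hE⟩ := middle_exact (fun a => x (.inl a)) (fun b => x (.inr b)) hcyc
    (by intro a; fin_cases a; exacts [hp0, hp1])
    (by intro b; fin_cases b; exacts [hq0, hq1])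
  have hsum_eq : Sum.elim (fun a => x (Sum.inl a)) (fun b => x (Sum.inr b)) = x := by
    funext j; rcases j with a | b <;> rfl
  rw [hsum_eq] at hE
  refine ⟨fun s => homogeneousComponent (i-2) (E s), ?_, ?_⟩
  · intro s _
    rw [llh, if_pos hi]
    exact homogeneousComponent_mem _ _
  · show lld _ = x
    funext j
    have hE' : ∀ j, lld E j = x j := fun j => congrFun hE j
    rcases j with a | b
    · rw [lld_apply_inl, ← homComp_X_mul, ← homComp_X_mul, ← map_add]
      have := hE' (.inl a)
      rw [lld_apply_inl] at this
      rw [this]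
      rw [homogeneousComponent_of_mem ((mem_homogeneousSubmodule _ _).mpr (hhom (.inl a))),
        if_pos (by omega)]
    · rw [lld_apply_inr, ← homComp_X_mul, ← homComp_X_mul, ← map_neg, ← map_sub]
      have := hE' (.inr b)
      rw [lld_apply_inr] at this
      rw [this]
      rw [homogeneousComponent_of_mem ((mem_homogeneousSubmodule _ _).mpr (hhom (.inr b))),
        if_pos (by omega)]

lemma part6 (i : ℕ) (hi : 2 ≤ i) :
    Module.finrank ℂ (llZ i ⧸ (llB i).comap (llZ i).subtype) = 2 * (i - 1) := by
  set f : llZ i →ₗ[ℂ] ((Fin (i-1) ⊕ Fin (i-1)) → ℂ) := (psi i) ∘ₗ (llZ i).subtype with hf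
  have hker : LinearMap.ker f = (llB i).comap (llZ i).subtype := by
    ext y
    rcases y with ⟨x, hx⟩
    simp only [LinearMap.mem_ker, Submodule.mem_comap, hf, LinearMap.comp_apply,
      Submodule.subtype_apply]
    constructor
    · exact mem_llB_of_psi_zero i hi x hx
    · rintro ⟨E, _, hEeq⟩
      have : x = lld E := hEeq.symm
      rw [this, psi_lld]
  have hsurj : Function.Surjective f := by
    intro c
    obtain ⟨x, hx, hpsi⟩ := psi_surj_on_Z i hi c
    exact ⟨⟨x, hx⟩, hpsi⟩
  rw [← hker, (LinearMap.quotKerEquivOfSurjective f hsurj).finrank_eq,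
    Module.finrank_fintype_fun_eq_card, Fintype.card_sum, Fintype.card_fin]
  omega

lemma eq_C_of_hom0 {p : Rll} (hp : IsHomogeneous p 0) : p = C (coeff 0 p) := by
  ext m
  by_cases hm : m = 0
  · subst hm; simp
  · rw [coeff_C, if_neg (Ne.symm hm)]
    exact hp.coeff_eq_zero (fun h => hm ((Finsupp.degree_eq_zero_iff m).mp h))

lemma part7 (i : ℕ) (hil : i < 2) : llZ i ≤ llB i := by
  intro x hx
  obtain ⟨hker, hpi⟩ := Submodule.mem_inf.mp hx
  have hx0 : x = 0 := by
    interval_cases i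
    · funext j
      have := hpi j (Set.mem_univ j)
      rw [llh, if_neg (by omega)] at this
      simpa using this
    · have hc : ∀ j, x j = C (coeff 0 (x j)) := by
        intro j
        have := hpi j (Set.mem_univ j)
        rw [llh, if_pos le_rfl] at this
        exact eq_C_of_hom0 ((mem_homogeneousSubmodule _ _).mp this)
      have hcyc : X 0 * x (.inl 0) + X 1 * x (.inl 1)
          + X 2 * x (.inr 0) + X 3 * x (.inr 1) = 0 := by
        have : llm x = 0 := hker
        rw [llm_apply] at this
        exact this
      rw [hc (.inl 0), hc (.inl 1), hc (.inr 0), hc (.inr 1)] at hcyc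
      have hz : ∀ k : Fin 4, ∀ p : Rll,
          eval (fun j : Fin 4 => if j = k then (1:ℂ) else 0) (X k * p)
            = eval (fun j : Fin 4 => if j = k then (1:ℂ) else 0) p := by
        intro k p; simp
      have e0 := congrArg (eval (fun j : Fin 4 => if j = (0:Fin 4) then (1:ℂ) else 0)) hcyc
      have e1 := congrArg (eval (fun j : Fin 4 => if j = (1:Fin 4) then (1:ℂ) else 0)) hcyc
      have e2 := congrArg (eval (fun j : Fin 4 => if j = (2:Fin 4) then (1:ℂ) else 0)) hcyc
      have e3 := congrArg (eval (fun j : Fin 4 => if j = (3:Fin 4) then (1:ℂ) else 0)) hcyc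
      simp at e0 e1 e2 e3
      funext j
      simp only [Pi.zero_apply]
      rcases j with a | b
      · fin_cases a
        · show x (Sum.inl 0) = 0
          rw [hc (.inl 0), e0, map_zero]
        · show x (Sum.inl 1) = 0
          rw [hc (.inl 1), e1, map_zero]
      · fin_cases b
        · show x (Sum.inr 0) = 0
          rw [hc (.inr 0), e2, map_zero]
        · show x (Sum.inr 1) = 0
          rw [hc (.inr 1), e3, map_zero]
  rw [hx0]
  exact Submodule.zero_mem _

/-- the complex `R ←m− R⁴ ←d− R⁴ ←e− R`: compositions vanish,
`e` is injective, `ker d = im e`, `im m` is the maximal ideal, and the middle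
cohomology `ker m / im d` has dimension `2(i−1)` in internal degree `i ≥ 2`
and vanishes in degrees `i < 2`. -/
theorem twoLines_koszul_complex :
    llm ∘ₗ lld = 0 ∧
    lld ∘ₗ lle = 0 ∧
    Function.Injective lle ∧
    LinearMap.ker lld = LinearMap.range lle ∧
    LinearMap.range llm = Ideal.span {lamv 0, lamv 1, muv 0, muv 1} ∧
    (∀ i : ℕ, 2 ≤ i →
      Module.finrank ℂ (llZ i ⧸ (llB i).comap (llZ i).subtype) = 2 * (i - 1)) ∧
    (∀ i : ℕ, i < 2 → llZ i ≤ llB i) :=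
  ⟨llm_comp_lld, lld_comp_lle, lle_injective, ker_lld_eq, range_llm, part6, part7⟩

end
end
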